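/- Let R be an associative unital (not necessarily commutative) ring and let F, F', G, G', Q₁, Q₂ ∈ R satisfy F' = G' + Q₁·Q₂, G·G' = 1, and F'·F = 1. Then (1 + Q₂·G·Q₁)·(1 − Q₂·F·Q₁) = 1 and G·Q₁·(1 − Q₂·F·Q₁) = F·Q₁. (Paper's Lemma 3.2.) -/
import Mathlib

/-- Paper's Lemma 3.2: formal calculus in an associative unital ring.
`F'` and `G'` play the roles of the symbols `F⁻¹` and `G⁻¹`. -/
theorem stmt_1 {R : Type*} [Ring R] (F F' G G' Q₁ Q₂ : R)
    (hF' : F' = G' + Q₁ * Q₂) (hG : G * G' = 1) (hF : F' * F = 1) :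
    (1 + Q₂ * G * Q₁) * (1 - Q₂ * F * Q₁) = 1 ∧
    G * Q₁ * (1 - Q₂ * F * Q₁) = F * Q₁ := by
  have h1 : G * F' * F = G := by rw [mul_assoc, hF, mul_one]
  have key : G * Q₁ * Q₂ * F = G - F := by
    rw [hF'] at h1
    have : (G * G' + G * (Q₁ * Q₂)) * F = G := by rw [← mul_add]; exact h1
    rw [hG] at this
    have : F + G * (Q₁ * Q₂) * F = G := by
      calc F + G * (Q₁ * Q₂) * F = (1 + G * (Q₁ * Q₂)) * F := by noncomm_ring
        _ = G := this
    rw [eq_sub_iff_add_eq]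
    calc G * Q₁ * Q₂ * F + F = F + G * (Q₁ * Q₂) * F := by noncomm_ring
      _ = G := this
  constructor
  · have e : (1 + Q₂ * G * Q₁) * (1 - Q₂ * F * Q₁)
        = 1 + Q₂ * (G - F - G * Q₁ * Q₂ * F) * Q₁ := by noncomm_ring
    rw [e, key]; noncomm_ring
  · calc G * Q₁ * (1 - Q₂ * F * Q₁) = G * Q₁ - (G * Q₁ * Q₂ * F) * Q₁ := by noncomm_ring
      _ = G * Q₁ - (G - F) * Q₁ := by rw [key]
      _ = F * Q₁ := by noncomm_ring
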